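/- arXiv:1209.5313 — 2 statements merged into one kernel-verified Lean document; each statement's English description precedes it below -/
import Mathlib

section
/- Fix p_0, p_1, p_2 > 0 with p_0 ≤ p_2, and fix ε > 0 and r ≤ 1/(p_1 + 2√(p_0 p_2)) − ε. Consider the random 2-CNF formula F̄ on n variables in which each of the C(n,2) clauses with two positive literals is present independently with probability q_2 = 2p_2 r/n, each of the n(n−1) clauses with one positive and one negative literal is present independently with probability q_1 = p_1 r/n, and each of the C(n,2) clauses with two negative literals is present independently with probability q_0 = 2p_0 r/n. Then F̄ is satisfiable with probability tending to 1 as n → ∞. -/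
open Finset

/-- A literal over `n` variables: a variable together with a sign (`true` = positive). -/
abbrev Lit (n : ℕ) := Fin n × Bool

/-- The negation of a literal. -/
def Lit.neg {n : ℕ} (w : Lit n) : Lit n := (w.1, !w.2)

/-- A `k`-clause over `n` variables: a set of `k` literals on `k` distinct variables. -/
abbrev Clause (n k : ℕ) :=
  {C : Finset (Lit n) // C.card = k ∧ (C.image Prod.fst).card = k}

/-- The number of positive literals in a clause. -/
def Clause.posCount {n k : ℕ} (C : Clause n k) : ℕ :=
  (C.1.filter fun p => p.2 = true).card

/-- The 2-clause `c = (w ∨ w')` gives rise to the directed edge `a → b` of the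
implication graph iff `(a, b) = (¬w, w')` or `(a, b) = (¬w', w)`,
i.e. iff `¬a ∈ c`, `b ∈ c` and `b` is not the literal `¬a` itself. -/
def EdgeFrom {n : ℕ} (c : Clause n 2) (a b : Lit n) : Prop :=
  a.neg ∈ c.1 ∧ b ∈ c.1 ∧ a.neg ≠ b

/-- The implication graph of the 2-CNF formula `F` has an edge `a → b`. -/
def ImpEdge {n : ℕ} (F : Finset (Clause n 2)) (a b : Lit n) : Prop :=
  ∃ c ∈ F, EdgeFrom c a b

/-- `w : Fin t → Lit n` is a bicycle (of length `t ≥ 2`) in the implication graph of `F`: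
a sequence of `t` literals of distinct variables forming a directed path
`w 0 → w 1 → ⋯ → w (t-1)`, together with two additional directed edges `u → w 0` and
`w (t-1) → v` for some `u, v ∈ {w 0, …, w (t-1), ¬w 0, …, ¬w (t-1)}`. -/
def IsBicycle {n t : ℕ} (F : Finset (Clause n 2)) (w : Fin t → Lit n) : Prop :=
  ∃ ht : 2 ≤ t,
    Function.Injective (fun j => (w j).1) ∧
    (∀ j : Fin t, ∀ hj : j.1 + 1 < t, ImpEdge F (w j) (w ⟨j.1 + 1, hj⟩)) ∧
    ∃ u v : Lit n,
      (∃ j, u = w j ∨ u = (w j).neg) ∧ (∃ j, v = w j ∨ v = (w j).neg) ∧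
      ImpEdge F u (w ⟨0, by omega⟩) ∧ ImpEdge F (w ⟨t - 1, by omega⟩) v

/-- The assignment `σ` satisfies the 2-CNF formula `F` (a finite set of 2-clauses). -/
def SatF {n : ℕ} (σ : Fin n → Bool) (F : Finset (Clause n 2)) : Prop :=
  ∀ c ∈ F, ∃ p ∈ c.1, σ p.1 = p.2

/-- The inclusion probability of a 2-clause: `q2` for a clause with two positive literals,
`q1` for a clause with one positive and one negative literal, and `q0` for a clause with
two negative literals. -/
noncomputable def clauseProb {n : ℕ} (q0 q1 q2 : ℝ) (c : Clause n 2) : ℝ :=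
  if c.posCount = 2 then q2 else if c.posCount = 1 then q1 else q0

/-- The probability, under independent inclusion of each 2-clause `c` with probability
`clauseProb q0 q1 q2 c`, that the resulting random 2-CNF formula is exactly `F`. -/
noncomputable def formulaWeight {n : ℕ} (q0 q1 q2 : ℝ) (F : Finset (Clause n 2)) : ℝ :=
  (∏ c ∈ F, clauseProb q0 q1 q2 c) * ∏ c ∈ Fᶜ, (1 - clauseProb q0 q1 q2 c)

/-!
An unsatisfiable 2-CNF formula has a literal `ℓ` with `ℓ ⟶* ¬ℓ ⟶* ℓ` in its implication graph:
otherwise, ordering the literals by a linear extension of the inclusion order of their sets of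
ancestors and making a literal true iff it comes after its negation satisfies every clause.
Cutting a shortest walk `ℓ ⟶* ¬ℓ` at its first repeated variable and closing it up, then cutting
the closed walk once more at its first repeated variable, yields a *bicycle*: a path on `t + 2`
distinct variables together with an edge into its start and an edge out of its end, both at
literals over the path's variables; its `t + 3` clauses are distinct.

The expected number of bicycles on `t + 2` variables is at most
`n ^ (t + 2) * (2 (t + 2)) ^ 2 * qmax ^ 2 * ∑ₛ ∏ᵢ M (s i) (s (i + 1))`, where the sum over the
signs of the path is governed by the transfer matrix `M = edgeProb q0 q1 q2`, with Perron root
`ρ = q1 + √(q0 q2)` and eigenvector `(√(q2 / q0), 1)`. For `qᵢ = aᵢ / n` this is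
`O((n ρ) ^ (t + 1) / n)` with `n ρ = r (p1 + 2 √(p0 p2)) < 1`, so unsatisfiability has
probability `O(1 / n)`.
-/

namespace Lit

variable {n : ℕ}

@[simp] lemma neg_neg (a : Lit n) : a.neg.neg = a := by simp [Lit.neg]

@[simp] lemma neg_fst (a : Lit n) : a.neg.1 = a.1 := rfl

lemma neg_ne_self (a : Lit n) : a.neg ≠ a := by simp [Lit.neg, Prod.ext_iff]

lemma eq_or_eq_neg_of_fst_eq {a b : Lit n} (h : a.1 = b.1) : a = b ∨ a = b.neg := by
  obtain ⟨x, s⟩ := a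
  obtain ⟨y, u⟩ := b
  cases s <;> cases u <;> simp_all [Lit.neg]

def rename {m : ℕ} (x : Fin m → Fin n) (u : Lit m) : Lit n := (x u.1, u.2)

lemma rename_injective {m : ℕ} {x : Fin m → Fin n} (hx : Function.Injective x) :
    Function.Injective (rename x) :=
  fun _ _ e => Prod.ext (hx (congrArg Prod.fst e :)) (congrArg Prod.snd e :)

end Lit

namespace Clause

variable {n : ℕ}

lemma exists_eq_pair (c : Clause n 2) : ∃ a b : Lit n, a.1 ≠ b.1 ∧ c.1 = {a, b} := by
  obtain ⟨a, b, -, hc⟩ := Finset.card_eq_two.1 c.2.1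
  refine ⟨a, b, fun hab => ?_, hc⟩
  have := c.2.2
  simp [hc, hab] at this

def ofEdge (a b : Lit n) (h : a.1 ≠ b.1) : Clause n 2 :=
  ⟨{a.neg, b}, by
    have hne : a.neg ≠ b := fun e => h (congrArg Prod.fst e :)
    simp [Finset.card_pair hne, Finset.card_pair h]⟩

lemma ofEdge_eq_ofEdge {a b a' b' : Lit n} {h : a.1 ≠ b.1} {h' : a'.1 ≠ b'.1}
    (e : ofEdge a b h = ofEdge a' b' h') : (a = a' ∧ b = b') ∨ (a = b'.neg ∧ b = a'.neg) := by
  have e' : ({a.neg, b} : Set (Lit n)) = {a'.neg, b'} := by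
    simpa [ofEdge] using congrArg (fun c : Clause n 2 => (c.1 : Set (Lit n))) e
  rcases Set.pair_eq_pair_iff.1 e' with ⟨h1, h2⟩ | ⟨h1, h2⟩
  · exact .inl ⟨by simpa using congrArg Lit.neg h1, h2⟩
  · exact .inr ⟨by simpa using congrArg Lit.neg h1, h2⟩

end Clause

lemma EdgeFrom.carrier_eq {n : ℕ} {c : Clause n 2} {a b : Lit n} (h : EdgeFrom c a b) :
    c.1 = {a.neg, b} :=
  (Finset.eq_of_subset_of_card_le (Finset.insert_subset h.1 (by simpa using h.2.1))
    (by rw [c.2.1, Finset.card_pair h.2.2])).symm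

namespace ImpEdge

variable {n : ℕ} {F : Finset (Clause n 2)} {a b : Lit n}

lemma fst_ne (h : ImpEdge F a b) : a.1 ≠ b.1 := by
  obtain ⟨c, -, hc⟩ := h
  intro hab
  have := c.2.2
  simp [hc.carrier_eq, hab] at this

lemma ofEdge_mem (h : ImpEdge F a b) : Clause.ofEdge a b h.fst_ne ∈ F := by
  obtain ⟨c, hF, hc⟩ := h
  convert hF
  exact Subtype.ext hc.carrier_eq.symm

end ImpEdge

section ClauseProb

variable {n : ℕ} {q0 q1 q2 : ℝ}

lemma clauseProb_nonneg (h0 : 0 ≤ q0) (h1 : 0 ≤ q1) (h2 : 0 ≤ q2) (c : Clause n 2) :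
    0 ≤ clauseProb q0 q1 q2 c := by
  unfold clauseProb
  split_ifs <;> assumption

lemma clauseProb_le {b : ℝ} (h0 : q0 ≤ b) (h1 : q1 ≤ b) (h2 : q2 ≤ b) (c : Clause n 2) :
    clauseProb q0 q1 q2 c ≤ b := by
  unfold clauseProb
  split_ifs <;> assumption

/-- The edge `(x, a) → (y, b)` comes from the clause `(x, !a) ∨ (y, b)`, which has
`(!a) + b` positive literals. -/
def edgeProb (q0 q1 q2 : ℝ) : Matrix Bool Bool ℝ
  | false, true => q2
  | true, false => q0
  | _, _ => q1

lemma clauseProb_ofEdge (q0 q1 q2 : ℝ) {a b : Lit n} (h : a.1 ≠ b.1) :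
    clauseProb q0 q1 q2 (Clause.ofEdge a b h) = edgeProb q0 q1 q2 a.2 b.2 := by
  obtain ⟨x, s⟩ := a
  obtain ⟨y, u⟩ := b
  have hxy : x ≠ y := h
  cases s <;> cases u <;>
    simp [clauseProb, Clause.posCount, Clause.ofEdge, Lit.neg, edgeProb, filter_insert,
      filter_singleton, hxy]

lemma edgeProb_nonneg (h0 : 0 ≤ q0) (h1 : 0 ≤ q1) (h2 : 0 ≤ q2) (a b : Bool) :
    0 ≤ edgeProb q0 q1 q2 a b := by
  cases a <;> cases b <;> assumption

end ClauseProb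

section RandomSubset

variable {α : Type*} [Fintype α] [DecidableEq α] (p : α → ℝ)

def subsetWeight (F : Finset α) : ℝ :=
  (∏ c ∈ F, p c) * ∏ c ∈ Fᶜ, (1 - p c)

open scoped Classical in
noncomputable def subsetProb (P : Finset α → Prop) : ℝ :=
  ∑ F, subsetWeight p F * if P F then 1 else 0

lemma subsetProb_superset (S : Finset α) : subsetProb p (S ⊆ ·) = ∏ c ∈ S, p c := by
  classical
  -- Expand `∏ c, (p c + g c)` where `g` vanishes on `S`: only the terms of the `T ⊇ S` survive.
  have hT : ∀ T : Finset α, (∏ c ∈ univ \ T, if c ∈ S then 0 else 1 - p c)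
      = if S ⊆ T then ∏ c ∈ Tᶜ, (1 - p c) else 0 := by
    intro T
    rw [← Finset.compl_eq_univ_sdiff]
    split_ifs with hST
    · exact Finset.prod_congr rfl fun c hc =>
        if_neg fun hcS => Finset.mem_compl.1 hc (hST hcS)
    · obtain ⟨c, hcS, hcT⟩ := Finset.not_subset.1 hST
      exact Finset.prod_eq_zero (Finset.mem_compl.2 hcT) (if_pos hcS)
  have key := Finset.prod_add p (fun c => if c ∈ S then 0 else 1 - p c) univ
  simp only [Finset.powerset_univ, hT, mul_ite, mul_zero] at key
  have hl : ∀ c, (p c + if c ∈ S then 0 else 1 - p c) = if c ∈ S then p c else 1 := by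
    intro c; split_ifs <;> ring
  simp only [hl, Finset.prod_ite_mem, Finset.univ_inter] at key
  rw [key, subsetProb]
  exact Finset.sum_congr rfl fun F _ => by split_ifs <;> simp [subsetWeight]

lemma sum_subsetWeight : ∑ F, subsetWeight p F = 1 := by
  simpa [subsetProb] using subsetProb_superset p ∅

lemma subsetProb_not (P : Finset α → Prop) :
    subsetProb p (fun F => ¬ P F) = 1 - subsetProb p P := by
  classical
  rw [← sum_subsetWeight p, subsetProb, subsetProb, ← Finset.sum_sub_distrib]
  exact Finset.sum_congr rfl fun F _ => by split_ifs <;> simp_all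

lemma subsetProb_eq_zero {P : Finset α → Prop} (h : ∀ F, ¬P F) : subsetProb p P = 0 :=
  Finset.sum_eq_zero fun F _ => by simp [h F]

variable {p} (h0 : ∀ c, 0 ≤ p c) (h1 : ∀ c, p c ≤ 1)
include h0 h1

lemma subsetWeight_nonneg (F : Finset α) : 0 ≤ subsetWeight p F :=
  mul_nonneg (Finset.prod_nonneg fun c _ => h0 c)
    (Finset.prod_nonneg fun c _ => sub_nonneg.2 (h1 c))

lemma subsetProb_mono {P Q : Finset α → Prop} (h : ∀ F, P F → Q F) :
    subsetProb p P ≤ subsetProb p Q := by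
  classical
  refine Finset.sum_le_sum fun F _ => mul_le_mul_of_nonneg_left ?_ (subsetWeight_nonneg h0 h1 F)
  by_cases hP : P F
  · simp [hP, h F hP]
  · rw [if_neg hP]
    split_ifs <;> norm_num

lemma subsetProb_le_one (P : Finset α → Prop) : subsetProb p P ≤ 1 := by
  calc subsetProb p P ≤ subsetProb p (fun _ => True) := subsetProb_mono h0 h1 fun _ _ => trivial
    _ = 1 := by simpa [subsetProb] using sum_subsetWeight p

lemma subsetProb_exists_le {ι : Type*} (s : Finset ι) (E : ι → Finset α → Prop) :
    subsetProb p (fun F => ∃ i ∈ s, E i F) ≤ ∑ i ∈ s, subsetProb p (E i) := by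
  classical
  simp only [subsetProb]
  rw [Finset.sum_comm]
  refine Finset.sum_le_sum fun F _ => ?_
  rw [← Finset.mul_sum]
  refine mul_le_mul_of_nonneg_left ?_ (subsetWeight_nonneg h0 h1 F)
  split_ifs with hE
  · obtain ⟨i, hi, hEi⟩ := hE
    calc (1 : ℝ) = if E i F then 1 else 0 := (if_pos hEi).symm
      _ ≤ ∑ j ∈ s, if E j F then 1 else 0 :=
        Finset.single_le_sum (f := fun j => if E j F then (1 : ℝ) else 0)
          (fun j _ => by split_ifs <;> norm_num) hi
  · exact Finset.sum_nonneg fun j _ => by split_ifs <;> norm_num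

end RandomSubset

section TransferMatrix

open Matrix

variable {ι : Type*} [Fintype ι] [DecidableEq ι]

lemma sum_mul_prod_chain {R : Type*} [CommSemiring R] (M : Matrix ι ι R) (t : ℕ) (h : ι → R) :
    ∑ s : Fin (t + 1) → ι, h (s 0) * ∏ i : Fin t, M (s i.castSucc) (s i.succ)
      = h ⬝ᵥ (M ^ t *ᵥ 1) := by
  induction t generalizing h with
  | zero =>
    rw [← (Equiv.funUnique (Fin 1) ι).symm.sum_comp]
    simp [dotProduct]
  | succ t ih =>
    rw [← (Fin.consEquiv fun _ => ι).sum_comp, Fintype.sum_prod_type]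
    have hrow : ∀ a, ∑ s : Fin (t + 1) → ι,
        h a * (M a (s 0) * ∏ i : Fin t, M (s i.castSucc) (s i.succ))
          = h a * (M *ᵥ (M ^ t *ᵥ 1)) a := by
      intro a
      rw [← Finset.mul_sum, ih]
      rfl
    simp [Fin.consEquiv, Fin.prod_univ_succ, hrow, pow_succ', dotProduct]

lemma pow_mulVec_one_le {M : Matrix ι ι ℝ} (hM : ∀ i j, 0 ≤ M i j) {v : ι → ℝ} {ρ : ℝ}
    (hv : M *ᵥ v = ρ • v) (hv1 : 1 ≤ v) (t : ℕ) : M ^ t *ᵥ 1 ≤ ρ ^ t • v := by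
  induction t with
  | zero => simpa using hv1
  | succ t ih =>
    intro i
    calc (M ^ (t + 1) *ᵥ 1) i = ∑ j, M i j * (M ^ t *ᵥ 1) j := by
          rw [pow_succ', ← mulVec_mulVec]; rfl
      _ ≤ ∑ j, M i j * (ρ ^ t • v) j :=
          Finset.sum_le_sum fun j _ => mul_le_mul_of_nonneg_left (ih j) (hM i j)
      _ = (ρ ^ (t + 1) • v) i := by
          rw [pow_succ, mul_smul, ← hv, ← mulVec_smul]; rfl

lemma sum_prod_chain_le {M : Matrix ι ι ℝ} (hM : ∀ i j, 0 ≤ M i j) {v : ι → ℝ} {ρ : ℝ}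
    (hv : M *ᵥ v = ρ • v) (hv1 : 1 ≤ v) (t : ℕ) :
    ∑ s : Fin (t + 1) → ι, ∏ i : Fin t, M (s i.castSucc) (s i.succ) ≤ ρ ^ t * ∑ i, v i := by
  have h := sum_mul_prod_chain M t 1
  simp only [Pi.one_apply, one_mul] at h
  rw [h, ← smul_eq_mul, Finset.smul_sum]
  exact Finset.sum_le_sum fun i _ => by
    simpa using pow_mulVec_one_le hM hv hv1 t i

end TransferMatrix

section EdgeProb

open Matrix

variable {q0 q1 q2 : ℝ}

lemma edgeProb_mulVec (hq0 : 0 < q0) (hq2 : 0 ≤ q2) :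
    edgeProb q0 q1 q2 *ᵥ (fun b => if b then 1 else √(q2 / q0))
      = (q1 + √(q0 * q2)) • fun b => if b then 1 else √(q2 / q0) := by
  obtain ⟨a, ha, rfl⟩ : ∃ a, 0 < a ∧ q0 = a ^ 2 :=
    ⟨√q0, Real.sqrt_pos.2 hq0, (Real.sq_sqrt hq0.le).symm⟩
  obtain ⟨c, hc, rfl⟩ : ∃ c, 0 ≤ c ∧ q2 = c ^ 2 :=
    ⟨√q2, Real.sqrt_nonneg _, (Real.sq_sqrt hq2).symm⟩
  rw [← div_pow, ← mul_pow, Real.sqrt_sq (by positivity), Real.sqrt_sq (by positivity)]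
  ext b
  cases b
  · simp [mulVec, dotProduct, edgeProb]
    field_simp
    ring
  · simp [mulVec, dotProduct, edgeProb]
    field_simp

lemma sum_prod_edgeProb_le (hq0 : 0 < q0) (hq1 : 0 ≤ q1) (hq02 : q0 ≤ q2) (t : ℕ) :
    ∑ s : Fin (t + 1) → Bool, ∏ i : Fin t, edgeProb q0 q1 q2 (s i.castSucc) (s i.succ)
      ≤ 2 * √(q2 / q0) * (q1 + √(q0 * q2)) ^ t := by
  have h1 : 1 ≤ √(q2 / q0) := Real.one_le_sqrt.2 ((one_le_div hq0).2 hq02)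
  have hv1 : (1 : Bool → ℝ) ≤ fun b => if b then 1 else √(q2 / q0) := by
    intro b; cases b <;> simp [h1]
  calc _ ≤ (q1 + √(q0 * q2)) ^ t * ∑ b : Bool, if b then 1 else √(q2 / q0) :=
        sum_prod_chain_le (edgeProb_nonneg hq0.le hq1 (hq0.le.trans hq02))
          (edgeProb_mulVec hq0 (hq0.le.trans hq02)) hv1 t
    _ ≤ (q1 + √(q0 * q2)) ^ t * (2 * √(q2 / q0)) := by
        gcongr
        simp only [Fintype.sum_bool, ite_true, Bool.false_eq_true, ite_false]
        linarith
    _ = _ := by ring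

end EdgeProb

lemma exists_first_repeat {β : Type*} (f : ℕ → β) {s m : ℕ} (hs : Set.InjOn f (Set.Iio s))
    (hm : ∃ j < m, f j = f m) :
    ∃ k, s ≤ k ∧ k ≤ m ∧ Set.InjOn f (Set.Iio k) ∧ ∃ j < k, f j = f k := by
  classical
  have hP : ∃ k, ∃ j < k, f j = f k := ⟨m, hm⟩
  obtain ⟨j, hjk, hj⟩ := Nat.find_spec hP
  refine ⟨Nat.find hP, ?_, Nat.find_min' hP hm, ?_, j, hjk, hj⟩
  · by_contra! hlt
    exact hjk.ne (hs (hjk.trans hlt) hlt hj)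
  · intro a ha b hb hab
    by_contra hne
    rcases lt_or_gt_of_ne hne with h | h
    · exact Nat.find_min hP hb ⟨a, h, hab⟩
    · exact Nat.find_min hP ha ⟨b, h, hab.symm⟩

lemma injOn_Ioc_of_injOn_Iio {β : Type*} {f : ℕ → β} {j k : ℕ} (hinj : Set.InjOn f (Set.Iio k))
    (hjk : j < k) (hj : f j = f k) : Set.InjOn f (Set.Ioc j k) := by
  have key : ∀ a ∈ Set.Ioc j k, ∀ b ∈ Set.Ioc j k, b < k → f a = f b → a = b := by
    intro a ha b hb hbk e
    rcases ha.2.lt_or_eq with hak | rfl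
    · exact hinj hak hbk e
    · exact absurd (hinj hjk hbk (hj.trans e)) hb.1.ne
  intro a ha b hb e
  rcases hb.2.lt_or_eq with hbk | rfl
  · exact key a ha b hb hbk e
  · rcases ha.2.lt_or_eq with hak | rfl
    · exact (key b hb a ha hak e.symm).symm
    · rfl

section Walk

variable {α : Type*} {R : α → α → Prop}

variable (R) in
def IsWalk (w : ℕ → α) (m : ℕ) : Prop :=
  ∀ i < m, R (w i) (w (i + 1))

def walkAppend (w w' : ℕ → α) (m : ℕ) : ℕ → α :=
  fun i => if i ≤ m then w i else w' (i - m)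

lemma walkAppend_of_le {w w' : ℕ → α} {m i : ℕ} (hi : i ≤ m) : walkAppend w w' m i = w i :=
  if_pos hi

lemma walkAppend_add {w w' : ℕ → α} {m : ℕ} (e : w m = w' 0) (i : ℕ) :
    walkAppend w w' m (m + i) = w' i := by
  rcases Nat.eq_zero_or_pos i with rfl | hi
  · exact (walkAppend_of_le le_rfl).trans e
  · simp [walkAppend, hi.ne']

namespace IsWalk

variable {w w' : ℕ → α} {m m' : ℕ}

lemma mono (h : IsWalk R w m) {k : ℕ} (hk : k ≤ m) : IsWalk R w k :=
  fun i hi => h i (hi.trans_le hk)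

lemma shift (h : IsWalk R w m) (j : ℕ) : IsWalk R (fun i => w (j + i)) (m - j) :=
  fun i hi => by simpa [add_assoc] using h (j + i) (by omega)

lemma append (h : IsWalk R w m) (h' : IsWalk R w' m') (e : w m = w' 0) :
    IsWalk R (walkAppend w w' m) (m + m') := by
  intro i hi
  rcases lt_or_ge i m with him | hmi
  · rw [walkAppend_of_le him.le, walkAppend_of_le him]
    exact h i him
  · obtain ⟨d, rfl⟩ := Nat.exists_eq_add_of_le hmi
    rw [walkAppend_add e, add_assoc, walkAppend_add e]
    exact h' d (by omega)

lemma reflTransGen (h : IsWalk R w m) {i j : ℕ} (hij : i ≤ j) (hj : j ≤ m) :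
    Relation.ReflTransGen R (w i) (w j) := by
  induction j, hij using Nat.le_induction with
  | base => exact .refl
  | succ j _ ih => exact (ih (by omega)).tail (h j (by omega))

end IsWalk

lemma exists_isWalk {a b : α} (h : Relation.ReflTransGen R a b) :
    ∃ m w, IsWalk R w m ∧ w 0 = a ∧ w m = b := by
  induction h using Relation.ReflTransGen.head_induction_on with
  | refl => exact ⟨0, fun _ => b, fun i hi => absurd hi (Nat.not_lt_zero i), rfl, rfl⟩
  | @head a' c hac _ ih =>
    obtain ⟨m, w, hw, h0, hm⟩ := ih
    refine ⟨m + 1, fun i => Nat.casesOn (motive := fun _ => α) i a' w, ?_, rfl, hm⟩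
    rintro (_ | i) hi
    · simpa [h0] using hac
    · exact hw i (by omega)

/-- A shortest walk visits no vertex twice. -/
lemma exists_isWalk_injOn {a b : α} (h : Relation.ReflTransGen R a b) :
    ∃ m w, IsWalk R w m ∧ w 0 = a ∧ w m = b ∧ Set.InjOn w (Set.Iic m) := by
  classical
  have hP := exists_isWalk h
  obtain ⟨w, hw, h0, hm⟩ := Nat.find_spec hP
  set m := Nat.find hP
  have shortcut : ∀ i j, i < j → j ≤ m → w i ≠ w j := by
    intro i j hij hjm e
    refine Nat.find_min hP (m := i + (m - j)) (by omega) ⟨walkAppend w (fun x => w (j + x)) i,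
      (hw.mono (by omega)).append (hw.shift j) e, (walkAppend_of_le (Nat.zero_le i)).trans h0, ?_⟩
    rw [walkAppend_add e, Nat.add_sub_cancel' hjm, hm]
  refine ⟨m, w, hw, h0, hm, fun i hi j hj e => ?_⟩
  by_contra hne
  rcases lt_or_gt_of_ne hne with hij | hij
  · exact shortcut i j hij hj e
  · exact shortcut j i hij hi e.symm

end Walk

section TwoSat

variable {n : ℕ}

abbrev ImpReach (F : Finset (Clause n 2)) : Lit n → Lit n → Prop :=
  Relation.ReflTransGen (ImpEdge F)

variable {F : Finset (Clause n 2)}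

open scoped Classical in
noncomputable def ancestors (F : Finset (Clause n 2)) (ℓ : Lit n) : Finset (Lit n) :=
  univ.filter (ImpReach F · ℓ)

lemma mem_ancestors {z ℓ : Lit n} : z ∈ ancestors F ℓ ↔ ImpReach F z ℓ := by
  simp [ancestors]

lemma ancestors_mono {a b : Lit n} (h : ImpReach F a b) : ancestors F a ⊆ ancestors F b :=
  fun _ hz => mem_ancestors.2 ((mem_ancestors.1 hz).trans h)

theorem exists_satF_of_not_reach_neg
    (h : ∀ ℓ : Lit n, ¬(ImpReach F ℓ ℓ.neg ∧ ImpReach F ℓ.neg ℓ)) : ∃ σ, SatF σ F := by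
  classical
  let r : Lit n → LinearExtension (Finset (Lit n)) := fun ℓ => toLinearExtension (ancestors F ℓ)
  have hmono : ∀ {a b}, ImpEdge F a b → r a ≤ r b := fun e =>
    toLinearExtension.monotone (ancestors_mono (.single e))
  have hne : ∀ ℓ, r ℓ ≠ r ℓ.neg := fun ℓ e => by
    have e' : ancestors F ℓ = ancestors F ℓ.neg := e
    exact h ℓ ⟨mem_ancestors.1 (e' ▸ mem_ancestors.2 .refl),
      mem_ancestors.1 (e' ▸ mem_ancestors.2 .refl)⟩
  let σ : Fin n → Bool := fun x => decide (r (x, false) < r (x, true))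
  have hsat : ∀ ℓ : Lit n, r ℓ.neg < r ℓ → σ ℓ.1 = ℓ.2 := by
    rintro ⟨x, (_ | _)⟩ hℓ
    · simpa [σ, Lit.neg] using hℓ.le
    · simpa [σ, Lit.neg] using hℓ
  refine ⟨σ, fun c hc => ?_⟩
  obtain ⟨a, b, hab, hcab⟩ := c.exists_eq_pair
  have hab' : a ≠ b := fun e => hab (congrArg Prod.fst e)
  have e1 : ImpEdge F a.neg b := ⟨c, hc, by simp [hcab], by simp [hcab], by simpa using hab'⟩
  have e2 : ImpEdge F b.neg a := ⟨c, hc, by simp [hcab], by simp [hcab], by simpa using hab'.symm⟩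
  by_cases ha : r a.neg < r a
  · exact ⟨a, by simp [hcab], hsat a ha⟩
  by_cases hb : r b.neg < r b
  · exact ⟨b, by simp [hcab], hsat b hb⟩
  have ha' := lt_of_le_of_ne (not_lt.1 ha) (hne a)
  have hb' := lt_of_le_of_ne (not_lt.1 hb) (hne b)
  exact absurd ((hmono e1).trans_lt (hb'.trans_le ((hmono e2).trans ha'.le))) (lt_irrefl _)

end TwoSat

section Bicycle

variable {n : ℕ} {F : Finset (Clause n 2)}

lemma exists_closed_walk_of_reach_neg {ℓ : Lit n} (h1 : ImpReach F ℓ ℓ.neg)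
    (h2 : ImpReach F ℓ.neg ℓ) :
    ∃ s N d, s < N ∧ IsWalk (ImpEdge F) d N ∧ d N = d 0 ∧ d s = (d 0).neg ∧
      Set.InjOn (fun i => (d i).1) (Set.Ioc 0 s) := by
  obtain ⟨m, w, hw, h0, hm, hinj⟩ := exists_isWalk_injOn h1
  have hm0 : 0 < m := Nat.pos_of_ne_zero fun e => Lit.neg_ne_self ℓ (by rw [← hm, ← h0, e])
  obtain ⟨k, -, hkm, hinjk, j, hjk, hj⟩ := exists_first_repeat (fun i => (w i).1) (s := 0)
    (by simp) ⟨0, hm0, by simp [h0, hm]⟩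
  have hwk : w k = (w j).neg := by
    refine (Lit.eq_or_eq_neg_of_fst_eq hj.symm).resolve_left fun e => hjk.ne' ?_
    exact hinj (Set.mem_Iic.2 hkm) (Set.mem_Iic.2 (hjk.le.trans hkm)) e
  have hback : ImpReach F (w k) (w j) :=
    ((hw.reflTransGen hkm le_rfl).trans (hm ▸ h0 ▸ h2)).trans
      (hw.reflTransGen (Nat.zero_le j) (hjk.le.trans hkm))
  obtain ⟨r, q, hq, hq0, hqr⟩ := exists_isWalk hback
  have hr : 0 < r := Nat.pos_of_ne_zero fun e => Lit.neg_ne_self (w j) (by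
    rw [← hwk, ← hq0, ← hqr, e])
  -- `w j ⟶ ⋯ ⟶ w k = ¬(w j)` has distinct variables after its start; close it up by `q`.
  let w' : ℕ → Lit n := fun i => w (j + i)
  have he : w' (k - j) = q 0 := by simp [w', Nat.add_sub_cancel' hjk.le, hq0]
  have hd : Set.EqOn (walkAppend w' q (k - j)) w' (Set.Iic (k - j)) :=
    fun i hi => walkAppend_of_le hi
  refine ⟨k - j, k - j + r, walkAppend w' q (k - j), by omega,
    ((hw.shift j).mono (by omega)).append hq he, ?_, ?_, ?_⟩
  · rw [walkAppend_add he, hqr, hd (Set.mem_Iic.2 (Nat.zero_le _))]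
    rfl
  · rw [hd (Set.mem_Iic.2 le_rfl), hd (Set.mem_Iic.2 (Nat.zero_le _)), he, hq0, hwk]
    rfl
  · refine (((injOn_Ioc_of_injOn_Iio hinjk hjk hj).comp (add_right_injective j).injOn
      fun i hi => ?_).congr fun i hi => ?_)
    · simp only [Set.mem_Ioc] at hi ⊢
      omega
    · simp [hd (Set.Ioc_subset_Iic_self hi), w']

/-- A path `(x 0, s 0) → ⋯ → (x (t+1), s (t+1))` on distinct variables, with an edge entering
its first literal and one leaving its last. The outer literals `u`, `v` lie over the path's
variables, so they are elements of `Lit (t + 2)` renamed by `x`; `not_cycle` excludes the case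
where both extra edges are the single edge closing the path into a cycle. -/
structure IsBicycleOn (F : Finset (Clause n 2)) {t : ℕ} (x : Fin (t + 2) → Fin n)
    (s : Fin (t + 2) → Bool) (u v : Lit (t + 2)) : Prop where
  injective : Function.Injective x
  path : ∀ i : Fin (t + 1), ImpEdge F (x i.castSucc, s i.castSucc) (x i.succ, s i.succ)
  enter : ImpEdge F (u.rename x) (x 0, s 0)
  leave : ImpEdge F (x (Fin.last _), s (Fin.last _)) (v.rename x)
  not_cycle : ¬(u = (Fin.last _, s (Fin.last _)) ∧ v = (0, s 0))

abbrev BicycleShape (n t : ℕ) :=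
  (Fin (t + 2) → Fin n) × (Fin (t + 2) → Bool) × Lit (t + 2) × Lit (t + 2)

lemma exists_isBicycleOn_of_closed_walk {s N : ℕ} {d : ℕ → Lit n} (hsN : s < N)
    (hd : IsWalk (ImpEdge F) d N) (hN : d N = d 0) (hs : d s = (d 0).neg)
    (hinj : Set.InjOn (fun i => (d i).1) (Set.Ioc 0 s)) :
    ∃ t x sg u v, IsBicycleOn F (t := t) x sg u v := by
  have hs0 : s ≠ 0 := fun e => Lit.neg_ne_self (d 0) (by rw [← hs, e])
  have hs1 : s ≠ 1 := by
    rintro rfl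
    exact (hd 0 (by omega)).fst_ne (by simp [hs])
  have hinj' : Set.InjOn (fun i => (d (i + 1)).1) (Set.Iio s) := fun a ha b hb e => by
    simpa using hinj (by simp at ha ⊢; omega) (by simp at hb ⊢; omega) e
  obtain ⟨k, hsk, hkN, hinjk, j, hjk, hj⟩ := exists_first_repeat _ (m := N - 1) hinj'
    ⟨s - 1, by omega, by simp [Nat.sub_add_cancel (by omega : 1 ≤ s),
      Nat.sub_add_cancel (by omega : 1 ≤ N), hs, hN]⟩
  -- The path is `d 1, …, d k`; it is entered from `d 0`, whose variable is that of `d s`, and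
  -- left towards `d (k + 1)`, whose variable is that of `d (j + 1)`.
  obtain ⟨t, rfl⟩ : ∃ t, k = t + 2 := ⟨k - 2, by omega⟩
  refine ⟨t, fun i => (d (i + 1)).1, fun i => (d (i + 1)).2, (⟨s - 1, by omega⟩, (d 0).2),
    (⟨j, hjk⟩, (d (t + 3)).2), fun a b e => Fin.ext (hinjk a.2 b.2 e), fun i => ?_, ?_, ?_, ?_⟩
  · simpa using hd (i + 1) (by omega)
  · simpa [Lit.rename, Nat.sub_add_cancel (by omega : 1 ≤ s), hs] using hd 0 (by omega)
  · simpa [Lit.rename, hj] using hd (t + 2) (by omega)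
  · rintro ⟨hu, -⟩
    have hsk : s = t + 2 := by simpa [Fin.ext_iff] using congrArg (fun u => u.1.val) hu
    have h2 : (d 0).2 = (d s).2 := by simpa [hsk] using congrArg Prod.snd hu
    simp [hs, Lit.neg] at h2

theorem exists_isBicycleOn_of_not_satF (h : ¬∃ σ, SatF σ F) :
    ∃ t x sg u v, IsBicycleOn F (t := t) x sg u v := by
  obtain ⟨ℓ, h1, h2⟩ : ∃ ℓ : Lit n, ImpReach F ℓ ℓ.neg ∧ ImpReach F ℓ.neg ℓ := by
    by_contra! hn
    exact h (exists_satF_of_not_reach_neg fun ℓ hℓ => hn ℓ hℓ.1 hℓ.2)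
  obtain ⟨s, N, d, hsN, hd, hN, hs, hinj⟩ := exists_closed_walk_of_reach_neg h1 h2
  exact exists_isBicycleOn_of_closed_walk hsN hd hN hs hinj

end Bicycle

section BicycleProb

variable {n t : ℕ} {F : Finset (Clause n 2)} {x : Fin (t + 2) → Fin n} {s : Fin (t + 2) → Bool}
  {u v : Lit (t + 2)}

namespace IsBicycleOn

lemma add_two_le (hB : IsBicycleOn F x s u v) : t + 2 ≤ n := by
  simpa using Fintype.card_le_of_injective x hB.injective

variable (hB : IsBicycleOn F x s u v)

def pathClause (i : Fin (t + 1)) : Clause n 2 := Clause.ofEdge _ _ (hB.path i).fst_ne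

def enterClause : Clause n 2 := Clause.ofEdge _ _ hB.enter.fst_ne

def leaveClause : Clause n 2 := Clause.ofEdge _ _ hB.leave.fst_ne

def clauses : Finset (Clause n 2) :=
  insert hB.enterClause (insert hB.leaveClause (univ.image hB.pathClause))

lemma pathClause_injective : Function.Injective hB.pathClause := by
  intro i j e
  rcases Clause.ofEdge_eq_ofEdge e with ⟨e1, -⟩ | ⟨e1, e2⟩
  · simpa [hB.injective.eq_iff] using congrArg Prod.fst e1
  · have i1 := congrArg Fin.val (hB.injective (congrArg Prod.fst e1 : x i.castSucc = x j.succ))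
    have i2 := congrArg Fin.val (hB.injective (congrArg Prod.fst e2 : x i.succ = x j.castSucc))
    simp only [Fin.val_castSucc, Fin.val_succ] at i1 i2
    omega

lemma enterClause_notMem : hB.enterClause ∉ univ.image hB.pathClause := by
  simp only [Finset.mem_image, Finset.mem_univ, true_and, not_exists]
  intro j e
  rcases Clause.ofEdge_eq_ofEdge e.symm with ⟨-, e2⟩ | ⟨-, e2⟩
  · exact Fin.succ_ne_zero j (hB.injective (congrArg Prod.fst e2 : x 0 = x j.succ)).symm
  · have hj : j.castSucc = 0 := by
      simpa [hB.injective.eq_iff] using (congrArg Prod.fst e2).symm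
    rw [hj] at e2
    exact Lit.neg_ne_self _ e2.symm

lemma leaveClause_notMem : hB.leaveClause ∉ univ.image hB.pathClause := by
  simp only [Finset.mem_image, Finset.mem_univ, true_and, not_exists]
  intro j e
  rcases Clause.ofEdge_eq_ofEdge e.symm with ⟨e1, -⟩ | ⟨e1, -⟩
  · have := congrArg Fin.val
      (hB.injective (congrArg Prod.fst e1 : x (Fin.last _) = x j.castSucc))
    simp only [Fin.val_last, Fin.val_castSucc] at this
    omega
  · have hj : j.succ = Fin.last _ := by
      simpa [hB.injective.eq_iff] using (congrArg Prod.fst e1).symm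
    rw [hj] at e1
    exact Lit.neg_ne_self _ e1.symm

lemma enterClause_ne_leaveClause : hB.enterClause ≠ hB.leaveClause := by
  intro e
  rcases Clause.ofEdge_eq_ofEdge e with ⟨e1, e2⟩ | ⟨-, e2⟩
  · exact hB.not_cycle ⟨Lit.rename_injective hB.injective e1,
      Lit.rename_injective hB.injective (e2.symm : v.rename x = Lit.rename x (0, s 0))⟩
  · have := congrArg Fin.val
      (hB.injective (congrArg Prod.fst e2 : x 0 = x (Fin.last _)))
    simp at this

lemma clauses_subset {F' : Finset (Clause n 2)} (h' : IsBicycleOn F' x s u v) :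
    hB.clauses ⊆ F' := by
  intro c hc
  simp only [clauses, Finset.mem_insert, Finset.mem_image, Finset.mem_univ, true_and] at hc
  rcases hc with rfl | rfl | ⟨i, rfl⟩
  · exact h'.enter.ofEdge_mem
  · exact h'.leave.ofEdge_mem
  · exact (h'.path i).ofEdge_mem

lemma prod_clauses (q0 q1 q2 : ℝ) :
    ∏ c ∈ hB.clauses, clauseProb q0 q1 q2 c = clauseProb q0 q1 q2 hB.enterClause *
      (clauseProb q0 q1 q2 hB.leaveClause *
        ∏ i : Fin (t + 1), edgeProb q0 q1 q2 (s i.castSucc) (s i.succ)) := by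
  rw [clauses, Finset.prod_insert (by simp [hB.enterClause_ne_leaveClause, hB.enterClause_notMem]),
    Finset.prod_insert hB.leaveClause_notMem,
    Finset.prod_image fun i _ j _ e => hB.pathClause_injective e]
  simp only [pathClause, clauseProb_ofEdge]

end IsBicycleOn

variable {q0 q1 q2 qm : ℝ} (h0 : 0 ≤ q0) (h1 : 0 ≤ q1) (h2 : 0 ≤ q2)
  (hqm : ∀ c : Clause n 2, clauseProb q0 q1 q2 c ≤ qm) (hqm1 : qm ≤ 1)
include h0 h1 h2 hqm hqm1

/-- A bicycle consists of `t + 3` distinct clauses, two of them with probability at most `qm`. -/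
lemma subsetProb_isBicycleOn_le (x : Fin (t + 2) → Fin n) (s : Fin (t + 2) → Bool)
    (u v : Lit (t + 2)) :
    subsetProb (clauseProb q0 q1 q2) (IsBicycleOn · x s u v)
      ≤ qm ^ 2 * ∏ i : Fin (t + 1), edgeProb q0 q1 q2 (s i.castSucc) (s i.succ) := by
  have hprod : 0 ≤ ∏ i : Fin (t + 1), edgeProb q0 q1 q2 (s i.castSucc) (s i.succ) :=
    Finset.prod_nonneg fun i _ => edgeProb_nonneg h0 h1 h2 _ _
  by_cases hex : ∃ F₀, IsBicycleOn F₀ x s u v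
  swap
  · rw [subsetProb_eq_zero _ fun F hF => hex ⟨F, hF⟩]
    positivity
  obtain ⟨F₀, hB⟩ := hex
  have hp0 := clauseProb_nonneg h0 h1 h2 (n := n)
  calc subsetProb (clauseProb q0 q1 q2) (IsBicycleOn · x s u v)
      ≤ subsetProb (clauseProb q0 q1 q2) (hB.clauses ⊆ ·) :=
        subsetProb_mono hp0 (fun c => (hqm c).trans hqm1) fun F => hB.clauses_subset
    _ = clauseProb q0 q1 q2 hB.enterClause * (clauseProb q0 q1 q2 hB.leaveClause *
          ∏ i : Fin (t + 1), edgeProb q0 q1 q2 (s i.castSucc) (s i.succ)) := by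
        rw [subsetProb_superset, hB.prod_clauses]
    _ ≤ qm * (qm * ∏ i : Fin (t + 1), edgeProb q0 q1 q2 (s i.castSucc) (s i.succ)) :=
        mul_le_mul (hqm _) (mul_le_mul_of_nonneg_right (hqm _) hprod)
          (mul_nonneg (hp0 _) hprod) ((hp0 hB.enterClause).trans (hqm _))
    _ = _ := by ring

theorem subsetProb_not_satF_le (hq0 : 0 < q0) (hq02 : q0 ≤ q2) :
    subsetProb (clauseProb q0 q1 q2) (fun F : Finset (Clause n 2) => ¬∃ σ, SatF σ F)
      ≤ ∑ t ∈ range n, (n : ℝ) ^ (t + 2) * (2 * (t + 2)) ^ 2 * qm ^ 2 *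
          (2 * √(q2 / q0) * (q1 + √(q0 * q2)) ^ (t + 1)) := by
  have hp0 := clauseProb_nonneg h0 h1 h2 (n := n)
  have hp1 : ∀ c : Clause n 2, clauseProb q0 q1 q2 c ≤ 1 := fun c => (hqm c).trans hqm1
  calc subsetProb (clauseProb q0 q1 q2) (fun F : Finset (Clause n 2) => ¬∃ σ, SatF σ F)
      ≤ subsetProb (clauseProb q0 q1 q2) (fun F => ∃ t ∈ range n,
          ∃ κ ∈ (univ : Finset (BicycleShape n t)), IsBicycleOn F κ.1 κ.2.1 κ.2.2.1 κ.2.2.2) := by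
        refine subsetProb_mono hp0 hp1 fun F hF => ?_
        obtain ⟨t, x, s, u, v, hB⟩ := exists_isBicycleOn_of_not_satF hF
        exact ⟨t, Finset.mem_range.2 (by have := hB.add_two_le; omega),
          (x, s, u, v), Finset.mem_univ _, hB⟩
    _ ≤ ∑ t ∈ range n, ∑ κ : BicycleShape n t,
          subsetProb (clauseProb q0 q1 q2) (IsBicycleOn · κ.1 κ.2.1 κ.2.2.1 κ.2.2.2) :=
        (subsetProb_exists_le hp0 hp1 _ _).trans
          (Finset.sum_le_sum fun t _ => subsetProb_exists_le hp0 hp1 _ _)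
    _ ≤ _ := by
        refine Finset.sum_le_sum fun t _ => ?_
        refine (Finset.sum_le_sum fun κ _ => subsetProb_isBicycleOn_le h0 h1 h2 hqm hqm1
          κ.1 κ.2.1 κ.2.2.1 κ.2.2.2).trans ?_
        simp only [Fintype.sum_prod_type, Finset.sum_const, Finset.card_univ, ← Finset.mul_sum,
          Fintype.card_prod, Fintype.card_fin, Fintype.card_bool, Fintype.card_fun, nsmul_eq_mul]
        have hsum := sum_prod_edgeProb_le hq0 h1 hq02 (t + 1)
        push_cast
        calc _ ≤ qm ^ 2 * ((n : ℝ) ^ (t + 2) * ((t + 2) * 2 * ((t + 2) * 2) *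
              (2 * √(q2 / q0) * (q1 + √(q0 * q2)) ^ (t + 1)))) := by gcongr
          _ = _ := by ring

end BicycleProb

lemma summable_sq_mul_geometric {y : ℝ} (hy0 : 0 ≤ y) (hy1 : y < 1) :
    Summable fun t : ℕ => ((t : ℝ) + 2) ^ 2 * y ^ (t + 1) := by
  have hy : ‖y‖ < 1 := by rwa [Real.norm_eq_abs, abs_of_nonneg hy0]
  have h2 := summable_pow_mul_geometric_of_norm_lt_one 2 hy
  have h1 := summable_pow_mul_geometric_of_norm_lt_one 1 hy
  have h0 := summable_geometric_of_norm_lt_one hy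
  exact (((h2.add (h1.mul_left 4)).add (h0.mul_left 4)).mul_left y).congr fun t => by ring

theorem subsetProb_not_satF_le_div {a0 a1 a2 : ℝ} (ha0 : 0 < a0) (ha1 : 0 ≤ a1) (ha02 : a0 ≤ a2)
    (hρ : a1 + √(a0 * a2) < 1) {n : ℕ} (hn : a1 + a2 ≤ n) :
    subsetProb (clauseProb (a0 / n) (a1 / n) (a2 / n))
        (fun F : Finset (Clause n 2) => ¬∃ σ, SatF σ F)
      ≤ 8 * √(a2 / a0) * (a1 + a2) ^ 2 *
          (∑' t : ℕ, ((t : ℝ) + 2) ^ 2 * (a1 + √(a0 * a2)) ^ (t + 1)) / n := by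
  have hn0 : (0 : ℝ) < n := by linarith
  set y := a1 + √(a0 * a2)
  have hy : a1 / n + √(a0 / n * (a2 / n)) = y / n := by
    rw [div_mul_div_comm, Real.sqrt_div' _ (by positivity), Real.sqrt_mul_self hn0.le]
    ring
  have hsq : √(a2 / n / (a0 / n)) = √(a2 / a0) := by rw [div_div_div_cancel_right₀ hn0.ne']
  have hqm : ∀ c : Clause n 2, clauseProb (a0 / n) (a1 / n) (a2 / n) c ≤ (a1 + a2) / n := by
    intro c
    unfold clauseProb
    split_ifs <;> gcongr <;> linarith
  have ha2 : 0 ≤ a2 := ha0.le.trans ha02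
  refine (subsetProb_not_satF_le (by positivity) (by positivity) (by positivity) hqm
    ((div_le_one hn0).2 hn) (by positivity) (by gcongr)).trans ?_
  rw [hy, hsq]
  calc _ = 8 * √(a2 / a0) * (a1 + a2) ^ 2 / n *
        ∑ t ∈ range n, ((t : ℝ) + 2) ^ 2 * y ^ (t + 1) := by
        rw [Finset.mul_sum]
        refine Finset.sum_congr rfl fun t _ => ?_
        rw [div_pow, div_pow]
        field_simp
        ring
    _ ≤ 8 * √(a2 / a0) * (a1 + a2) ^ 2 / n * ∑' t : ℕ, ((t : ℝ) + 2) ^ 2 * y ^ (t + 1) := by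
        gcongr
        exact (summable_sq_mul_geometric (by positivity) hρ).sum_le_tsum _
          fun t _ => by positivity
    _ = _ := by ring

theorem tendsto_subsetProb_satF {a0 a1 a2 : ℝ} (ha0 : 0 < a0) (ha1 : 0 ≤ a1) (ha02 : a0 ≤ a2)
    (hρ : a1 + √(a0 * a2) < 1) :
    Filter.Tendsto (fun n : ℕ => subsetProb (clauseProb (a0 / n) (a1 / n) (a2 / n))
      (fun F : Finset (Clause n 2) => ∃ σ, SatF σ F)) Filter.atTop (nhds 1) := by
  set K := 8 * √(a2 / a0) * (a1 + a2) ^ 2 *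
    ∑' t : ℕ, ((t : ℝ) + 2) ^ 2 * (a1 + √(a0 * a2)) ^ (t + 1)
  have hbounds : ∀ᶠ n : ℕ in Filter.atTop,
      1 - K / n ≤ subsetProb (clauseProb (a0 / n) (a1 / n) (a2 / n))
          (fun F : Finset (Clause n 2) => ∃ σ, SatF σ F) ∧
        subsetProb (clauseProb (a0 / n) (a1 / n) (a2 / n))
          (fun F : Finset (Clause n 2) => ∃ σ, SatF σ F) ≤ 1 := by
    refine (Filter.eventually_ge_atTop ⌈a1 + a2⌉₊).mono fun n hn => ?_
    have hn' : a1 + a2 ≤ n := Nat.ceil_le.1 hn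
    have hunsat := subsetProb_not_satF_le_div ha0 ha1 ha02 hρ hn'
    rw [subsetProb_not] at hunsat
    have hle : ∀ a, a ≤ a1 + a2 → a / n ≤ 1 := fun a ha =>
      div_le_one_of_le₀ (ha.trans hn') n.cast_nonneg
    have ha2 : 0 ≤ a2 := ha0.le.trans ha02
    exact ⟨by linarith, subsetProb_le_one (clauseProb_nonneg (by positivity) (by positivity)
      (by positivity)) (clauseProb_le (hle _ (by linarith)) (hle _ (by linarith))
        (hle _ (by linarith))) _⟩
  exact tendsto_of_tendsto_of_tendsto_of_le_of_le'
    (by simpa using (tendsto_const_div_atTop_nhds_zero_nat K).const_sub 1)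
    tendsto_const_nhds (hbounds.mono fun n h => h.1) (hbounds.mono fun n h => h.2)

lemma sum_formulaWeight_mul_ite {n : ℕ} (q0 q1 q2 : ℝ) (P : Finset (Clause n 2) → Prop)
    [DecidablePred P] :
    ∑ F, formulaWeight q0 q1 q2 F * (if P F then 1 else 0)
      = subsetProb (clauseProb q0 q1 q2) P := by
  unfold subsetProb
  congr!

open scoped Classical in
theorem random_2cnf_satisfiable_whp_general (p0 p1 p2 ε r : ℝ)
    (hp0 : 0 < p0) (hp1 : 0 < p1) (hp02 : p0 ≤ p2) (hε : 0 < ε)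
    (hr : 0 < r) (hrle : r ≤ 1 / (p1 + 2 * Real.sqrt (p0 * p2)) - ε) :
    Filter.Tendsto (fun n : ℕ =>
        ∑ F : Finset (Clause n 2),
          formulaWeight (2 * p0 * r / n) (p1 * r / n) (2 * p2 * r / n) F *
            (if ∃ σ : Fin n → Bool, SatF σ F then (1 : ℝ) else 0))
      Filter.atTop (nhds 1) := by
  simp only [sum_formulaWeight_mul_ite]
  refine tendsto_subsetProb_satF (by positivity) (by positivity) (by gcongr) ?_
  have hrΛ : r * (p1 + 2 * √(p0 * p2)) < 1 := by
    rw [← lt_div_iff₀ (by positivity)]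
    linarith
  rw [show 2 * p0 * r * (2 * p2 * r) = (2 * r) ^ 2 * (p0 * p2) by ring,
    Real.sqrt_mul (by positivity), Real.sqrt_sq (by positivity)]
  linarith

open scoped Classical in
/-- Fix `p0, p1, p2 > 0` with `p0 ≤ p2`, `ε > 0` and `0 < r ≤ 1/(p1 + 2√(p0 p2)) - ε`.
The random 2-CNF formula on `n` variables where each clause with two positive literals is
present independently with probability `q2 = 2 p2 r / n`, each clause with one positive
literal with probability `q1 = p1 r / n`, and each clause with two negative literals with
probability `q0 = 2 p0 r / n`, is satisfiable with probability tending to `1` as `n → ∞`. -/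
theorem random_2cnf_satisfiable_whp (p0 p1 p2 ε r : ℝ)
    (hp0 : 0 < p0) (hp1 : 0 < p1) (hp2 : 0 < p2) (hp02 : p0 ≤ p2) (hε : 0 < ε)
    (hr : 0 < r) (hrle : r ≤ 1 / (p1 + 2 * Real.sqrt (p0 * p2)) - ε) :
    Filter.Tendsto (fun n : ℕ =>
        ∑ F : Finset (Clause n 2),
          formulaWeight (2 * p0 * r / n) (p1 * r / n) (2 * p2 * r / n) F *
            (if ∃ σ : Fin n → Bool, SatF σ F then (1 : ℝ) else 0))
      Filter.atTop (nhds 1) :=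
  random_2cnf_satisfiable_whp_general p0 p1 p2 ε r hp0 hp1 hp02 hε hr hrle
end

section
/- For every p ∈ (0,1) there exist r > (ln 2)/(ln(8/7)) and β ∈ (0,1) such that H(β) + r·log₂( p·(1 − (1−β)³) + (1−p)·(7/8) ) > 0, where H(β) = −β·log₂ β − (1−β)·log₂(1−β) is the binary entropy function. (Note (ln 2)/(ln(8/7)) = 5.19… is the first-moment upper bound density for unbiased random 3-SAT.) -/
/-!
At `β = 1/2` and `r₀ = ln 2 / ln (8/7)` the rate `H(β) + r log₂ P(β)` vanishes, `P` being the
clause satisfaction probability. Its `β`-derivative there is `r₀ (6p/7) / ln 2 > 0`: the entropy is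
stationary at `1/2`, while the all-positive clauses make `P` increase with `β`. So the rate is
positive slightly to the right of `1/2`, and by continuity in `r` it stays positive for some
`r` slightly above `r₀`.
-/

/-- The binary entropy function `H(β) = -β log₂ β - (1-β) log₂ (1-β)`. -/
noncomputable def binH (β : ℝ) : ℝ :=
  -β * Real.logb 2 β - (1 - β) * Real.logb 2 (1 - β)

open Filter Topology Real

theorem Filter.Eventually.exists_gt_of_nhdsGT {α : Type*} [TopologicalSpace α] [LinearOrder α]
    [OrderTopology α] [DenselyOrdered α] [NoMaxOrder α] {a : α} {P : α → Prop}
    (h : ∀ᶠ x in 𝓝[>] a, P x) : ∃ b > a, P b :=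
  (h.and self_mem_nhdsWithin).exists.imp fun _ hb => ⟨hb.2, hb.1⟩

theorem HasDerivAt.eventually_nhdsGT_lt {f : ℝ → ℝ} {f' x : ℝ} (hf : HasDerivAt f f' x)
    (hf' : 0 < f') : ∀ᶠ y in 𝓝[>] x, f x < f y := by
  have hslope : ∀ᶠ y in 𝓝[>] x, 0 < slope f x y :=
    (hasDerivAt_iff_tendsto_slope.mp hf).eventually (eventually_gt_nhds hf')
      |>.filter_mono (nhdsWithin_mono _ fun _ hy => ne_of_gt hy)
  filter_upwards [hslope, self_mem_nhdsWithin] with y hy (hxy : x < y)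
  rw [slope_def_field, div_pos_iff_of_pos_right (sub_pos.mpr hxy)] at hy
  exact sub_pos.mp hy

theorem binH_eq_binEntropy_div (β : ℝ) : binH β = binEntropy β / log 2 := by
  simp only [binH, binEntropy, logb, log_inv]
  ring

/-- The probability that a random clause of the biased model is satisfied by a fixed assignment
with a `β` fraction of true variables. -/
noncomputable def clauseSatProb (p β : ℝ) : ℝ :=
  p * (1 - (1 - β) ^ 3) + (1 - p) * (7 / 8)

noncomputable def firstMomentRate (p r β : ℝ) : ℝ :=
  binH β + r * logb 2 (clauseSatProb p β)

theorem firstMomentRate_eq (p r β : ℝ) :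
    firstMomentRate p r β = (binEntropy β + r * log (clauseSatProb p β)) / log 2 := by
  rw [firstMomentRate, binH_eq_binEntropy_div, logb]
  ring

theorem clauseSatProb_half (p : ℝ) : clauseSatProb p (1 / 2) = 7 / 8 := by
  simp only [clauseSatProb]
  ring

theorem hasDerivAt_clauseSatProb (p β : ℝ) :
    HasDerivAt (clauseSatProb p) (3 * p * (1 - β) ^ 2) β := by
  have := (((hasDerivAt_id' β).const_sub 1).pow 3).const_sub 1 |>.const_mul p
    |>.add_const ((1 - p) * (7 / 8))
  refine this.congr_deriv ?_
  push_cast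
  ring

theorem firstMomentRate_half (p : ℝ) : firstMomentRate p (log 2 / log (8 / 7)) (1 / 2) = 0 := by
  have h87 : log (7 / 8) = -log (8 / 7) := by
    rw [← log_inv, inv_div]
  have hlog87 : log (8 / 7) ≠ 0 := (log_pos (by norm_num)).ne'
  rw [firstMomentRate_eq, one_div, binEntropy_two_inv, ← one_div, clauseSatProb_half, h87]
  field_simp
  ring

theorem hasDerivAt_firstMomentRate_half (p r : ℝ) :
    HasDerivAt (firstMomentRate p r) (r * (6 * p / 7) / log 2) (1 / 2) := by
  have hH := hasDerivAt_binEntropy (p := 1 / 2) (by norm_num) (by norm_num)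
  have hlog := (hasDerivAt_clauseSatProb p (1 / 2)).log (by rw [clauseSatProb_half]; norm_num)
  rw [funext (firstMomentRate_eq p r)]
  refine ((hH.add (hlog.const_mul r)).div_const (log 2)).congr_deriv ?_
  rw [clauseSatProb_half, show (1 : ℝ) - 1 / 2 = 1 / 2 by norm_num, sub_self]
  ring

/-- For every `p ∈ (0,1)` there exist `r > ln 2 / ln (8/7)` (the first-moment upper bound
density for unbiased random 3-SAT) and `β ∈ (0,1)` such that
`H(β) + r log₂( p (1 - (1-β)³) + (1-p) (7/8) ) > 0`. -/
theorem exists_density_above_first_moment (p : ℝ) (hp : p ∈ Set.Ioo (0 : ℝ) 1) :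
    ∃ r > Real.log 2 / Real.log (8 / 7), ∃ β ∈ Set.Ioo (0 : ℝ) 1,
      0 < binH β + r * Real.logb 2 (p * (1 - (1 - β) ^ 3) + (1 - p) * (7 / 8)) := by
  set r₀ := log 2 / log (8 / 7)
  have hr₀ : 0 < r₀ := div_pos (log_pos one_lt_two) (log_pos (by norm_num))
  have hslope : 0 < r₀ * (6 * p / 7) / log 2 := by
    have := hp.1
    positivity
  obtain ⟨β, hβ, hβ_pos, hβ_lt⟩ := ((hasDerivAt_firstMomentRate_half p r₀).eventually_nhdsGT_lt
    hslope).and (nhdsWithin_le_nhds (eventually_lt_nhds (by norm_num : (1 / 2 : ℝ) < 1)))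
    |>.exists_gt_of_nhdsGT
  rw [firstMomentRate_half] at hβ_pos
  have hr : ∀ᶠ r in 𝓝 r₀, 0 < firstMomentRate p r β :=
    (continuous_const.add (continuous_id.mul continuous_const)).continuousAt.eventually
      (lt_mem_nhds hβ_pos)
  obtain ⟨r, hr_gt, hr_pos⟩ := (hr.filter_mono nhdsWithin_le_nhds).exists_gt_of_nhdsGT
  exact ⟨r, hr_gt, β, ⟨by linarith, hβ_lt⟩, hr_pos⟩
end
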